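/- Let |ψ_a⟩, |ψ_b⟩ be orthonormal N-qubit states and O a Hermitian unitary observable. Define the (2N+1)-qubit state ρ^fin = ½(|+⟩|ψ_a⟩|ψ_b⟩ + |−⟩(O|ψ_b⟩)|ψ_a⟩)(⟨+|⟨ψ_a|⟨ψ_b| + ⟨−|⟨ψ_b|O ⟨ψ_a|). Then Tr[ρ^fin (|0⟩⟨0|⊗I)] = ½ if a ≠ b (i.e., ⟨ψ_a|ψ_b⟩ = 0), and equals ½ + ½⟨ψ_a|O|ψ_a⟩ if |ψ_a⟩ = |ψ_b⟩. -/
import Mathlib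


open Matrix Kronecker BigOperators

/-- The ancilla state `|+⟩`. -/
noncomputable def plusv : Fin 2 → ℂ := fun _ => (Real.sqrt 2 : ℂ)⁻¹

/-- The ancilla state `|−⟩`. -/
noncomputable def minusv : Fin 2 → ℂ :=
  fun x => if x = 0 then (Real.sqrt 2 : ℂ)⁻¹ else -(Real.sqrt 2 : ℂ)⁻¹

/-- The projector `|0⟩⟨0|` on the ancilla qubit. -/
noncomputable def proj0 : Matrix (Fin 2) (Fin 2) ℂ := !![1, 0; 0, 0]

lemma trace_vecMulVec_mul {n : Type*} [Fintype n] (w v : n → ℂ) (M : Matrix n n ℂ) :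
    (vecMulVec w v * M).trace = v ⬝ᵥ (M *ᵥ w) := by
  simp only [Matrix.trace, Matrix.diag, Matrix.mul_apply, vecMulVec_apply, dotProduct,
    mulVec, Finset.mul_sum, Finset.sum_mul]
  rw [Finset.sum_comm]
  refine Finset.sum_congr rfl fun j _ => Finset.sum_congr rfl fun i _ => by ring

lemma proj0_mulVec {d : ℕ} (w : Fin 2 × (Fin d × Fin d) → ℂ) :
    (proj0 ⊗ₖ (1 : Matrix (Fin d × Fin d) (Fin d × Fin d) ℂ)) *ᵥ w
      = fun x => if x.1 = 0 then w (0, x.2) else 0 := by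
  funext ⟨x, p⟩
  simp only [mulVec, dotProduct, kroneckerMap_apply, Fintype.sum_prod_type,
    Matrix.one_apply, mul_ite, mul_one, mul_zero, ite_mul, zero_mul, Finset.sum_ite_eq,
    Finset.mem_univ, if_true]
  fin_cases x <;> simp [proj0, Fin.sum_univ_two]

lemma prod_sum_factor {d : ℕ} (f f' g g' : Fin d → ℂ) :
    (∑ p : Fin d × Fin d, (f p.1 * g p.2) * (f' p.1 * g' p.2))
      = (∑ i, f i * f' i) * (∑ j, g j * g' j) := by
  rw [Fintype.sum_prod_type, Finset.sum_mul_sum]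
  exact Finset.sum_congr rfl fun i _ => Finset.sum_congr rfl fun j _ => by ring

lemma dot_conj {d : ℕ} (u v : Fin d → ℂ) :
    star u ⬝ᵥ v = (starRingEnd ℂ) (star v ⬝ᵥ u) := by
  simp [dotProduct, map_sum, mul_comm]

lemma dot_eq {d : ℕ} (u v : Fin d → ℂ) :
    (∑ i, (starRingEnd ℂ) (u i) * v i) = star u ⬝ᵥ v := by
  simp [dotProduct, Pi.star_apply, RCLike.star_def]

/-- The zero-outcome probability of the ancilla in the second-order VD circuit:
`½` for orthogonal inputs, `½ + ½⟨ψ_a|O|ψ_a⟩` for identical inputs. -/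
theorem stmt_4 {d : ℕ}
    (ψa ψb : Fin d → ℂ)
    (ha : star ψa ⬝ᵥ ψa = 1) (hb : star ψb ⬝ᵥ ψb = 1)
    (O : Matrix (Fin d) (Fin d) ℂ) (hO : O.IsHermitian) (hO2 : O * O = 1)
    (w : Fin 2 × (Fin d × Fin d) → ℂ)
    (hw : w = fun p => plusv p.1 * ψa p.2.1 * ψb p.2.2
      + minusv p.1 * (O *ᵥ ψb) p.2.1 * ψa p.2.2)
    (ρfin : Matrix (Fin 2 × (Fin d × Fin d)) (Fin 2 × (Fin d × Fin d)) ℂ)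
    (hρ : ρfin = (1/2 : ℂ) • vecMulVec w (star w)) :
    (star ψa ⬝ᵥ ψb = 0 →
      (ρfin * (proj0 ⊗ₖ (1 : Matrix (Fin d × Fin d) (Fin d × Fin d) ℂ))).trace = 1/2) ∧
    (ψa = ψb →
      (ρfin * (proj0 ⊗ₖ (1 : Matrix (Fin d × Fin d) (Fin d × Fin d) ℂ))).trace
        = 1/2 + 1/2 * (star ψa ⬝ᵥ (O *ᵥ ψa))) := by
  set T : ℂ := star ψa ⬝ᵥ (O *ᵥ ψb) with hT
  set S : ℂ := star ψa ⬝ᵥ ψb with hS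
  have hOn : star (O *ᵥ ψb) ⬝ᵥ (O *ᵥ ψb) = 1 := by
    rw [star_mulVec, ← dotProduct_mulVec, mulVec_mulVec, hO.eq, hO2, one_mulVec, hb]
  have key : (ρfin * (proj0 ⊗ₖ (1 : Matrix (Fin d × Fin d) (Fin d × Fin d) ℂ))).trace
      = 1/2 + (1/4) * (T * (starRingEnd ℂ) S + (starRingEnd ℂ) T * S) := by
    rw [hρ, Matrix.smul_mul, Matrix.trace_smul, trace_vecMulVec_mul, proj0_mulVec]
    have hc : (starRingEnd ℂ) ((Real.sqrt 2 : ℂ)⁻¹) = (Real.sqrt 2 : ℂ)⁻¹ := by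
      rw [map_inv₀, Complex.conj_ofReal]
    have hc2 : ((Real.sqrt 2 : ℂ)⁻¹) * ((Real.sqrt 2 : ℂ)⁻¹) = 1/2 := by
      rw [← mul_inv, ← Complex.ofReal_mul, Real.mul_self_sqrt (by norm_num)]
      norm_num
    have hdot : star w ⬝ᵥ (fun x : Fin 2 × (Fin d × Fin d) =>
        if x.1 = 0 then w (0, x.2) else 0)
        = (1/2 : ℂ) * (2 + T * (starRingEnd ℂ) S + (starRingEnd ℂ) T * S) := by
      have expand : star w ⬝ᵥ (fun x : Fin 2 × (Fin d × Fin d) =>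
          if x.1 = 0 then w (0, x.2) else 0)
          = ∑ p : Fin d × Fin d, (starRingEnd ℂ) (w (0, p)) * w (0, p) := by
        simp only [dotProduct, Fintype.sum_prod_type, Fin.sum_univ_two, Pi.star_apply]
        simp [RCLike.star_def]
      rw [expand]
      have hw0 : ∀ p : Fin d × Fin d, w (0, p)
          = (Real.sqrt 2 : ℂ)⁻¹ * (ψa p.1 * ψb p.2 + (O *ᵥ ψb) p.1 * ψa p.2) := by
        intro p; rw [hw]; simp [plusv, minusv]; ring
      have hterm : ∀ p : Fin d × Fin d, (starRingEnd ℂ) (w (0, p)) * w (0, p)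
          = (1/2 : ℂ) *
            (((starRingEnd ℂ) (ψa p.1) * (starRingEnd ℂ) (ψb p.2)) * (ψa p.1 * ψb p.2)
            + ((starRingEnd ℂ) (ψa p.1) * (starRingEnd ℂ) (ψb p.2)) * ((O *ᵥ ψb) p.1 * ψa p.2)
            + ((starRingEnd ℂ) ((O *ᵥ ψb) p.1) * (starRingEnd ℂ) (ψa p.2)) * (ψa p.1 * ψb p.2)
            + ((starRingEnd ℂ) ((O *ᵥ ψb) p.1) * (starRingEnd ℂ) (ψa p.2)) * ((O *ᵥ ψb) p.1 * ψa p.2)) := by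
        intro p
        rw [hw0 p]
        rw [show (starRingEnd ℂ) ((Real.sqrt 2 : ℂ)⁻¹ * (ψa p.1 * ψb p.2 + (O *ᵥ ψb) p.1 * ψa p.2))
            = (Real.sqrt 2 : ℂ)⁻¹ * ((starRingEnd ℂ) (ψa p.1) * (starRingEnd ℂ) (ψb p.2)
              + (starRingEnd ℂ) ((O *ᵥ ψb) p.1) * (starRingEnd ℂ) (ψa p.2)) from by
          rw [_root_.map_mul, map_add, _root_.map_mul, _root_.map_mul, hc]]
        linear_combination (((starRingEnd ℂ) (ψa p.1) * (starRingEnd ℂ) (ψb p.2)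
          + (starRingEnd ℂ) ((O *ᵥ ψb) p.1) * (starRingEnd ℂ) (ψa p.2))
          * (ψa p.1 * ψb p.2 + (O *ᵥ ψb) p.1 * ψa p.2)) * hc2
      simp only [hterm, ← Finset.mul_sum]
      congr 1
      have hAA : (∑ x : Fin d × Fin d,
          ((starRingEnd ℂ) (ψa x.1) * (starRingEnd ℂ) (ψb x.2)) * (ψa x.1 * ψb x.2)) = 1 := by
        rw [prod_sum_factor (fun i => (starRingEnd ℂ) (ψa i)) ψa
          (fun j => (starRingEnd ℂ) (ψb j)) ψb, dot_eq, dot_eq, ha, hb, mul_one]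
      have hAB : (∑ x : Fin d × Fin d,
          ((starRingEnd ℂ) (ψa x.1) * (starRingEnd ℂ) (ψb x.2)) * ((O *ᵥ ψb) x.1 * ψa x.2))
          = T * (starRingEnd ℂ) S := by
        rw [prod_sum_factor (fun i => (starRingEnd ℂ) (ψa i)) (O *ᵥ ψb)
          (fun j => (starRingEnd ℂ) (ψb j)) ψa, dot_eq, dot_eq, dot_conj ψb ψa, ← hT, ← hS]
      have hBA : (∑ x : Fin d × Fin d,
          ((starRingEnd ℂ) ((O *ᵥ ψb) x.1) * (starRingEnd ℂ) (ψa x.2)) * (ψa x.1 * ψb x.2))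
          = (starRingEnd ℂ) T * S := by
        rw [prod_sum_factor (fun i => (starRingEnd ℂ) ((O *ᵥ ψb) i)) ψa
          (fun j => (starRingEnd ℂ) (ψa j)) ψb, dot_eq, dot_eq, dot_conj (O *ᵥ ψb) ψa,
          ← hT, ← hS]
      have hBB : (∑ x : Fin d × Fin d,
          ((starRingEnd ℂ) ((O *ᵥ ψb) x.1) * (starRingEnd ℂ) (ψa x.2))
            * ((O *ᵥ ψb) x.1 * ψa x.2)) = 1 := by
        rw [prod_sum_factor (fun i => (starRingEnd ℂ) ((O *ᵥ ψb) i)) (O *ᵥ ψb)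
          (fun j => (starRingEnd ℂ) (ψa j)) ψa, dot_eq, dot_eq, hOn, ha, mul_one]
      rw [Finset.sum_add_distrib, Finset.sum_add_distrib, Finset.sum_add_distrib,
        hAA, hAB, hBA, hBB]
      ring
    rw [hdot, smul_eq_mul]
    ring
  refine ⟨fun h0 => ?_, fun hab => ?_⟩
  · rw [key, h0]
    simp
  · subst hab
    have hS1 : S = 1 := ha
    have hTc : (starRingEnd ℂ) T = T := by
      have h1 : star (O *ᵥ ψa) ⬝ᵥ ψa = (starRingEnd ℂ) T := dot_conj _ _
      rw [← h1, star_mulVec, ← dotProduct_mulVec, hO.eq]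
    rw [key, hS1, hTc]
    simp only [_root_.map_one]
    ring
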